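/- arXiv:1810.10290 — 3 statements merged into one kernel-verified Lean document; each statement's English description precedes it below -/
import Mathlib

section
/- Let G be the 3×3 real matrix G = (1/12)·[[19, -12, 3], [-12, 10, -3], [3, -3, 1]]. Then G is symmetric positive definite. -/
/-!
The matrix is `(1/12) Lᵀ L` for the unit lower-triangular `L = lowerFactor`, i.e. its quadratic
form is `(x₀² + (x₁ - 3x₀)² + (x₂ + 3x₀ - 3x₁)²) / 12`. Since `det L = 1`, `L` is injective, so
`Lᵀ L` is positive definite, and so is every positive multiple of it.
-/

open Matrix

def lowerFactor : Matrix (Fin 3) (Fin 3) ℝ := !![1, 0, 0; -3, 1, 0; 3, -3, 1]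

lemma det_lowerFactor : lowerFactor.det = 1 := by
  simp [lowerFactor, det_fin_three]

lemma transpose_lowerFactor_mul_self :
    lowerFactorᵀ * lowerFactor = !![19, -12, 3; -12, 10, -3; 3, -3, 1] := by
  ext i j
  fin_cases i <;> fin_cases j <;> simp [lowerFactor, mul_apply, Fin.sum_univ_three] <;> norm_num

lemma posDef_transpose_mul_self_of_isUnit_det {n : Type*} [Fintype n] [DecidableEq n]
    {L : Matrix n n ℝ} (hL : IsUnit L.det) : (Lᵀ * L).PosDef := by
  simpa using PosDef.conjTranspose_mul_self L
    (mulVec_injective_of_isUnit ((isUnit_iff_isUnit_det L).mpr hL))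

theorem stmt_0 :
    let G : Matrix (Fin 3) (Fin 3) ℝ :=
      (1/12 : ℝ) • !![19, -12, 3; -12, 10, -3; 3, -3, 1]
    G.IsSymm ∧ G.PosDef := by
  intro G
  have hG : G.PosDef := by
    rw [show G = (1/12 : ℝ) • (lowerFactorᵀ * lowerFactor) by rw [transpose_lowerFactor_mul_self]]
    exact (posDef_transpose_mul_self_of_isUnit_det (det_lowerFactor ▸ isUnit_one)).smul
      (by norm_num)
  exact ⟨isHermitian_iff_isSymm.mp hG.isHermitian, hG⟩
end

section
/- Let H be a real inner product space. For any w_{n+1}, w_n, w_{n-1}, w_{n-2} ∈ H, ⟨(5/3)w_{n+1} - (5/2)w_n + w_{n-1} - (1/6)w_{n-2}, w_{n+1}⟩ = ‖W_{n+1}‖_G² - ‖W_n‖_G² + (1/12)‖w_{n+1} - 3w_n + 3w_{n-1} - w_{n-2}‖², where for a triple V = (x,y,z) ∈ H³ we set ‖V‖_G² = (1/12)(19‖x‖² + 10‖y‖² + ‖z‖² - 24⟨x,y⟩ + 6⟨x,z⟩ - 6⟨y,z⟩), W_{n+1} = (w_{n+1}, w_n, w_{n-1}) and W_n = (w_n,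 w_{n-1}, w_{n-2}). -/
theorem stmt_3 {H : Type*} [NormedAddCommGroup H] [InnerProductSpace ℝ H]
    (w1 w0 wm1 wm2 : H)
    (GnormSq : H → H → H → ℝ)
    (hG : ∀ x y z : H, GnormSq x y z =
      (1/12) * (19*‖x‖^2 + 10*‖y‖^2 + ‖z‖^2
        - 24 * inner ℝ x y + 6 * inner ℝ x z - 6 * inner ℝ y z)) :
    inner ℝ ((5/3 : ℝ) • w1 - (5/2 : ℝ) • w0 + wm1 - (1/6 : ℝ) • wm2) w1 =
      GnormSq w1 w0 wm1 - GnormSq w0 wm1 wm2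
        + (1/12) * ‖w1 - (3:ℝ) • w0 + (3:ℝ) • wm1 - wm2‖^2 := by
  simp only [hG, ← real_inner_self_eq_norm_sq, inner_sub_left, inner_sub_right, inner_add_left,
    inner_add_right, real_inner_smul_right, real_inner_comm]
  ring
end

section
/- Let H be a real Hilbert space with norm ‖·‖ and let V be a subspace with a stronger norm ‖∇·‖ satisfying the Poincaré inequality ‖v‖ ≤ C_P ‖∇v‖ for all v ∈ V. Suppose a sequence (u^n) ⊂ V, ν > 0, Δt > 0, and F ≥ 0 satisfy the energy inequality ‖U_{n+1}‖_G² - ‖U_n‖_G² + (νΔt/2)‖∇u^{n+1}‖² ≤ (Δt/(2ν))·F² for all n ≥ 0, where U_n = (u^n, u^{n-1}, u^{n-2}) and ‖·‖_G is the G-norm on H³ with equivalence constant C_l (C_l‖V‖_G² ≤ ‖V‖² where ‖V‖² is the sum of component norms squared). Then with α = min{C_l ν Δt/(16 C_P²), 3/4}, for all n ≥ 0: ‖U_{n+1}‖_G² + (νΔt/4)‖∇u^{n+1}‖² + (νΔt/16)‖∇u^n‖² ≤ (1+α)^{-(n+1)}·(‖U_0‖_G² + (νΔt/4)‖∇u^0‖²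 + (νΔt/16)‖∇u^{-1}‖²) + max{8C_P²/(C_l ν²), 2Δt/(3ν)}·F². -/
/-!
With `E n = ‖U_{n+1}‖_G² + (νΔt/4)‖∇u^{n+1}‖² + (νΔt/16)‖∇u^n‖²`, the energy inequality, the
equivalence of the G-norm with the product norm and the Poincaré inequality combine into the
contraction `(1 + α) E n ≤ E (n - 1) + α M F²`: the G-norm part of `α E n` is absorbed by
`α ≤ C_l ν Δt / (16 C_P²)`, and the choice `α ≤ 3/4` leaves enough of the dissipation
`(νΔt/2)‖∇u^{n+1}‖²` to shift the gradient weights by one time level. Iterating the contraction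
gives geometric decay of the initial energy towards the level `M F²`.
-/

theorem le_inv_pow_mul_add_of_one_add_mul_le {a : ℕ → ℝ} {α b : ℝ} (hα : 0 < 1 + α)
    (hb : 0 ≤ b) (h : ∀ n, (1 + α) * a (n + 1) ≤ a n + α * b) (n : ℕ) :
    a n ≤ (1 + α)⁻¹ ^ n * a 0 + b := by
  induction n with
  | zero => simpa using hb
  | succ n ih =>
    refine le_of_mul_le_mul_left ?_ hα
    calc (1 + α) * a (n + 1) ≤ a n + α * b := h n
      _ ≤ (1 + α)⁻¹ ^ n * a 0 + b + α * b := by linarith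
      _ = (1 + α) * ((1 + α)⁻¹ ^ (n + 1) * a 0 + b) := by
        linear_combination (-(1 + α)⁻¹ ^ n * a 0) * mul_inv_cancel₀ hα.ne'

theorem le_min_mul_max {a a' b b' q : ℝ} (ha : 0 ≤ a) (ha' : 0 ≤ a')
    (hab : a * b = q) (hab' : a' * b' = q) : q ≤ min a a' * max b b' := by
  rcases min_cases a a' with ⟨h, -⟩ | ⟨h, -⟩ <;> rw [h]
  · exact hab ▸ mul_le_mul_of_nonneg_left (le_max_left b b') ha
  · exact hab' ▸ mul_le_mul_of_nonneg_left (le_max_right b b') ha'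

theorem mul_le_of_mul_le_sq_mul {α Cl CP c g T : ℝ} (hCl : 0 < Cl) (hα : 0 ≤ α) (hT : 0 ≤ T)
    (hg : Cl * g ≤ CP ^ 2 * T) (hαc : α * (16 * CP ^ 2) ≤ Cl * c) :
    α * g ≤ c / 16 * T := by
  refine le_of_mul_le_mul_left ?_ hCl
  calc Cl * (α * g) = α * (Cl * g) := by ring
    _ ≤ α * (CP ^ 2 * T) := mul_le_mul_of_nonneg_left hg hα
    _ = α * (16 * CP ^ 2) * T / 16 := by ring
    _ ≤ Cl * c * T / 16 := by gcongr
    _ = Cl * (c / 16 * T) := by ring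

/-- One step of the energy argument, with `c = νΔt`, `g₁, g₂` the G-norms and `d₀, d₁, d₂` the
squared gradient norms at consecutive time levels. -/
theorem one_add_mul_energy_le {α c f K g₁ g₂ d₀ d₁ d₂ : ℝ} (hα : α ≤ 3 / 4) (hc : 0 ≤ c)
    (hd₁ : 0 ≤ d₁) (hd₂ : 0 ≤ d₂) (henergy : g₂ - g₁ + c / 2 * d₂ ≤ f)
    (hcoer : α * g₂ ≤ c / 16 * (d₂ + d₁ + d₀)) (hf : f ≤ α * K) :
    (1 + α) * (g₂ + c / 4 * d₂ + c / 16 * d₁) ≤ g₁ + c / 4 * d₁ + c / 16 * d₀ + α * K := by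
  have h₂ : 0 ≤ (3 / 4 - α) * (c * d₂) := mul_nonneg (by linarith) (mul_nonneg hc hd₂)
  have h₁ : 0 ≤ (3 / 4 - α) * (c * d₁) := mul_nonneg (by linarith) (mul_nonneg hc hd₁)
  linarith [mul_nonneg hc hd₁]

theorem stmt_12_general {H : Type*} [NormedAddCommGroup H]
    (GnormSq : H → H → H → ℝ)
    (D : H → ℝ)
    (u : ℤ → H) (ν Δt CP Cl F : ℝ)
    (hν : 0 < ν) (hΔt : 0 < Δt) (hCP : 0 < CP) (hCl : 0 < Cl)
    (hPoin : ∀ n : ℤ, ‖u n‖ ≤ CP * D (u n))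
    (hEq : ∀ x y z : H, Cl * GnormSq x y z ≤ ‖x‖^2 + ‖y‖^2 + ‖z‖^2)
    (hEnergy : ∀ n : ℤ, 0 ≤ n →
      GnormSq (u (n+1)) (u n) (u (n-1)) - GnormSq (u n) (u (n-1)) (u (n-2))
        + ν * Δt / 2 * (D (u (n+1)))^2 ≤ Δt / (2*ν) * F^2) :
    ∀ n : ℕ,
      GnormSq (u (n+1)) (u n) (u (n-1))
          + ν * Δt / 4 * (D (u (n+1)))^2 + ν * Δt / 16 * (D (u n))^2
        ≤ (1 + min (Cl * ν * Δt / (16 * CP^2)) (3/4))⁻¹ ^ (n + 1) *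
            (GnormSq (u 0) (u (-1)) (u (-2))
              + ν * Δt / 4 * (D (u 0))^2 + ν * Δt / 16 * (D (u (-1)))^2)
          + max (8 * CP^2 / (Cl * ν^2)) (2 * Δt / (3 * ν)) * F^2 := by
  intro n
  set α := min (Cl * ν * Δt / (16 * CP^2)) (3/4)
  set M := max (8 * CP^2 / (Cl * ν^2)) (2 * Δt / (3 * ν))
  have hα₀ : 0 < α := lt_min (by positivity) (by norm_num)
  have hαCP : α * (16 * CP ^ 2) ≤ Cl * (ν * Δt) := by
    rw [← le_div_iff₀ (by positivity), ← mul_assoc]; exact min_le_left _ _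
  -- each branch of `α` times the matching branch of `M` is `Δt / (2ν)`
  have hαM : Δt / (2 * ν) ≤ α * M :=
    le_min_mul_max (by positivity) (by norm_num) (by field_simp; ring) (by field_simp; ring)
  have hPoin_sq (k : ℤ) : ‖u k‖ ^ 2 ≤ CP ^ 2 * D (u k) ^ 2 := by
    rw [← mul_pow]; exact pow_le_pow_left₀ (norm_nonneg _) (hPoin k) 2
  set E : ℤ → ℝ := fun k => GnormSq (u (k + 1)) (u k) (u (k - 1))
    + ν * Δt / 4 * D (u (k + 1)) ^ 2 + ν * Δt / 16 * D (u k) ^ 2 with hE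
  have hstep (k : ℕ) : (1 + α) * E k ≤ E (k - 1) + α * (M * F ^ 2) := by
    have hG : Cl * GnormSq (u (k + 1)) (u k) (u (k - 1))
        ≤ CP ^ 2 * (D (u (k + 1)) ^ 2 + D (u k) ^ 2 + D (u (k - 1)) ^ 2) := by
      linarith [hEq (u (k + 1)) (u k) (u (k - 1)), hPoin_sq (k + 1), hPoin_sq k, hPoin_sq (k - 1)]
    have hcoer := mul_le_of_mul_le_sq_mul hCl hα₀.le (by positivity) hG hαCP
    have := one_add_mul_energy_le (min_le_right _ _) (by positivity) (sq_nonneg _) (sq_nonneg _)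
      (hEnergy k k.cast_nonneg) hcoer (by rw [← mul_assoc]; gcongr)
    simpa [hE, sub_sub, one_add_one_eq_two] using this
  simpa [hE] using le_inv_pow_mul_add_of_one_add_mul_le (a := fun k : ℕ => E (k - 1))
    (by linarith) (by positivity) (fun k => by simpa using hstep k) (n + 1)

theorem stmt_12 {H : Type*} [NormedAddCommGroup H] [InnerProductSpace ℝ H]
    (GnormSq : H → H → H → ℝ)
    (hG : ∀ x y z : H, GnormSq x y z =
      (1/12) * (19*‖x‖^2 + 10*‖y‖^2 + ‖z‖^2
        - 24 * inner ℝ x y + 6 * inner ℝ x z - 6 * inner ℝ y z))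
    (D : H → ℝ) (hD : ∀ v, 0 ≤ D v)
    (u : ℤ → H) (ν Δt CP Cl F : ℝ)
    (hν : 0 < ν) (hΔt : 0 < Δt) (hCP : 0 < CP) (hCl : 0 < Cl) (hF : 0 ≤ F)
    (hPoin : ∀ n : ℤ, ‖u n‖ ≤ CP * D (u n))
    (hEq : ∀ x y z : H, Cl * GnormSq x y z ≤ ‖x‖^2 + ‖y‖^2 + ‖z‖^2)
    (hEnergy : ∀ n : ℤ, 0 ≤ n →
      GnormSq (u (n+1)) (u n) (u (n-1)) - GnormSq (u n) (u (n-1)) (u (n-2))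
        + ν * Δt / 2 * (D (u (n+1)))^2 ≤ Δt / (2*ν) * F^2) :
    ∀ n : ℕ,
      GnormSq (u (n+1)) (u n) (u (n-1))
          + ν * Δt / 4 * (D (u (n+1)))^2 + ν * Δt / 16 * (D (u n))^2
        ≤ (1 + min (Cl * ν * Δt / (16 * CP^2)) (3/4))⁻¹ ^ (n + 1) *
            (GnormSq (u 0) (u (-1)) (u (-2))
              + ν * Δt / 4 * (D (u 0))^2 + ν * Δt / 16 * (D (u (-1)))^2)
          + max (8 * CP^2 / (Cl * ν^2)) (2 * Δt / (3 * ν)) * F^2 :=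
  stmt_12_general GnormSq D u ν Δt CP Cl F hν hΔt hCP hCl hPoin hEq hEnergy
end
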